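/- Let a : ℝ → ℝ be continuously differentiable, 1-periodic, and strictly positive. Then ⟨a·[[a⁻³a′·[[a]]]]⟩ = −⟨a⁻³a′·[[a]]²⟩. (This is the identity defining the homogenization coefficient C₈, up to the factor 1/ρ⁽⁰⁾.) -/

import Mathlib

open MeasureTheory Matrix

/-- The mean of a function over one period: `⟨b⟩ = ∫₀¹ b(y) dy`. -/
noncomputable def pmean (b : ℝ → ℝ) : ℝ := ∫ y in (0:ℝ)..1, b y

/-- The fluctuating (mean-zero) part: `{b} = b − ⟨b⟩`. -/
noncomputable def pfluct (b : ℝ → ℝ) : ℝ → ℝ := fun y => b y - pmean b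

/-- The mean-zero primitive of the fluctuating part:
`[[b]](y) = ∫₀^y {b}(ξ) dξ − ∫₀¹ (∫₀^s {b}(ξ) dξ) ds`. -/
noncomputable def pbracket (b : ℝ → ℝ) : ℝ → ℝ :=
  fun y => (∫ ξ in (0:ℝ)..y, pfluct b ξ) - ∫ s in (0:ℝ)..1, (∫ ξ in (0:ℝ)..s, pfluct b ξ)

/-! The identity is the antisymmetry `⟨f·[[g]]⟩ = −⟨[[f]]·g⟩` of the bracket, applied to
`f = a` and `g = a⁻³a′[[a]]`. Since `⟨[[g]]⟩ = ⟨[[f]]⟩ = 0`, both sides are unchanged when `f`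
and `g` are replaced by their fluctuations, and `{f}·[[g]] + [[f]]·{g}` is the derivative of
`[[f]]·[[g]]`, whose values at `0` and `1` agree because `{f}` and `{g}` have mean zero. -/

section Bracket

variable {f g h : ℝ → ℝ}

lemma pmean_add (hf : IntervalIntegrable f volume 0 1) (hg : IntervalIntegrable g volume 0 1) :
    pmean (fun y => f y + g y) = pmean f + pmean g :=
  intervalIntegral.integral_add hf hg

lemma Continuous.pfluct (hf : Continuous f) : Continuous (pfluct f) :=
  hf.sub continuous_const

lemma pmean_pfluct (hf : IntervalIntegrable f volume 0 1) : pmean (pfluct f) = 0 := by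
  simp [pmean, pfluct, intervalIntegral.integral_sub hf intervalIntegrable_const]

lemma hasDerivAt_pbracket (hf : Continuous f) (y : ℝ) :
    HasDerivAt (pbracket f) (pfluct f y) y :=
  (hf.pfluct.integral_hasStrictDerivAt 0 y).hasDerivAt.sub_const _

lemma Continuous.pbracket (hf : Continuous f) : Continuous (pbracket f) :=
  continuous_iff_continuousAt.mpr fun y => (hasDerivAt_pbracket hf y).continuousAt

lemma pmean_pbracket (hf : Continuous f) : pmean (pbracket f) = 0 := by
  have hprim : Continuous fun s => ∫ ξ in (0:ℝ)..s, pfluct f ξ :=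
    intervalIntegral.continuous_primitive (fun _ _ => hf.pfluct.intervalIntegrable _ _) 0
  simp [pmean, pbracket, intervalIntegral.integral_sub (hprim.intervalIntegrable 0 1)
    intervalIntegrable_const]

lemma pbracket_one (hf : IntervalIntegrable f volume 0 1) : pbracket f 1 = pbracket f 0 := by
  have hmean := pmean_pfluct hf
  unfold pmean at hmean
  simp [pbracket, hmean]

lemma pmean_mul_eq_pmean_pfluct_mul (hf : Continuous f) (hh : Continuous h)
    (hmean : pmean h = 0) :
    pmean (fun y => f y * h y) = pmean (fun y => pfluct f y * h y) := by
  have hsplit : (fun y => f y * h y) = fun y => pfluct f y * h y + pmean f * h y := by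
    ext y; simp only [pfluct]; ring
  rw [hsplit, pmean_add (f := fun y => pfluct f y * h y) (g := fun y => pmean f * h y)
    (hf.pfluct.mul hh |>.intervalIntegrable 0 1)
    (continuous_const.mul hh |>.intervalIntegrable 0 1)]
  unfold pmean at hmean ⊢
  rw [intervalIntegral.integral_const_mul, hmean, mul_zero, add_zero]

lemma pmean_pfluct_mul_pbracket_add (hf : Continuous f) (hg : Continuous g) :
    pmean (fun y => pfluct f y * pbracket g y + pbracket f y * pfluct g y) = 0 := by
  rw [pmean, intervalIntegral.integral_deriv_mul_eq_sub
    (fun x _ => hasDerivAt_pbracket hf x) (fun x _ => hasDerivAt_pbracket hg x)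
    (hf.pfluct.intervalIntegrable 0 1) (hg.pfluct.intervalIntegrable 0 1),
    pbracket_one (hf.intervalIntegrable 0 1), pbracket_one (hg.intervalIntegrable 0 1), sub_self]

theorem pmean_mul_pbracket (hf : Continuous f) (hg : Continuous g) :
    pmean (fun y => f y * pbracket g y) = - pmean (fun y => pbracket f y * g y) := by
  have hIBP := pmean_pfluct_mul_pbracket_add hf hg
  rw [pmean_add (f := fun y => pfluct f y * pbracket g y) (g := fun y => pbracket f y * pfluct g y)
    (hf.pfluct.mul hg.pbracket |>.intervalIntegrable 0 1)
    (hf.pbracket.mul hg.pfluct |>.intervalIntegrable 0 1)] at hIBP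
  calc pmean (fun y => f y * pbracket g y)
      = pmean (fun y => pfluct f y * pbracket g y) :=
        pmean_mul_eq_pmean_pfluct_mul hf hg.pbracket (pmean_pbracket hg)
    _ = - pmean (fun y => pfluct g y * pbracket f y) := by
        simp_rw [mul_comm (pfluct g _)]
        exact eq_neg_of_add_eq_zero_left hIBP
    _ = - pmean (fun y => pbracket f y * g y) := by
        rw [← pmean_mul_eq_pmean_pfluct_mul hg hf.pbracket (pmean_pbracket hf)]
        simp_rw [mul_comm (g _)]

end Bracket

theorem statement10_general (a : ℝ → ℝ) (ha : ContDiff ℝ 1 a)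
    (hpos : ∀ y, 0 < a y) :
    pmean (fun y => a y * pbracket (fun z => (a z ^ 3)⁻¹ * deriv a z * pbracket a z) y)
      = - pmean (fun y => (a y ^ 3)⁻¹ * deriv a y * (pbracket a y)^2) := by
  have hca : Continuous a := ha.continuous
  have hcg : Continuous fun z => (a z ^ 3)⁻¹ * deriv a z * pbracket a z :=
    (((hca.pow 3).inv₀ fun z => pow_ne_zero 3 (hpos z).ne').mul
      (ha.continuous_deriv le_rfl)).mul hca.pbracket
  rw [pmean_mul_pbracket hca hcg]
  congr 2 with y
  ring

/-- For `a` continuously differentiable, 1-periodic and strictly positive,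
`⟨a·[[a⁻³a′·[[a]]]]⟩ = −⟨a⁻³a′·[[a]]²⟩`. -/
theorem statement10 (a : ℝ → ℝ) (ha : ContDiff ℝ 1 a) (hper : Function.Periodic a 1)
    (hpos : ∀ y, 0 < a y) :
    pmean (fun y => a y * pbracket (fun z => (a z ^ 3)⁻¹ * deriv a z * pbracket a z) y)
      = - pmean (fun y => (a y ^ 3)⁻¹ * deriv a y * (pbracket a y)^2) :=
  statement10_general a ha hpos
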